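/- arXiv:2312.16747 — 12 statements merged into one kernel-verified Lean document; each statement's English description precedes it below -/
import Mathlib

section
/- (Niven's theorem variant) The only rational numbers r in [0, 1/2] for which cos(rπ) is rational are r = 0, 1/3, and 1/2, with values 1, 1/2, and 0 respectively. -/
open Polynomial

lemma dickson_monic_deg : ∀ n : ℕ, (dickson 1 (1:ℤ) (n+1)).Monic ∧
    (dickson 1 (1:ℤ) (n+1)).natDegree = n + 1 := by
  intro n
  induction n using Nat.strong_induction_on with
  | _ n ih =>
    match n with
    | 0 => simpa [dickson_one] using monic_X
    | 1 =>
      have h2 : dickson 1 (1:ℤ) 2 = X ^ 2 - C 2 := by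
        rw [dickson_two, show (C (2:ℤ)) = 2 from by norm_num, C_1]; push_cast; ring
      rw [h2]
      exact ⟨monic_X_pow_sub_C 2 two_ne_zero, natDegree_X_pow_sub_C⟩
    | (m+2) =>
      obtain ⟨hm1, hd1⟩ := ih (m+1) (by omega)
      obtain ⟨hm0, hd0⟩ := ih m (by omega)
      have key : dickson 1 (1:ℤ) (m+3) = X * dickson 1 1 (m+2) - dickson 1 1 (m+1) := by
        have := dickson_add_two 1 (1:ℤ) (m+1)
        simpa [C_1] using this
      have hmul : (X * dickson 1 (1:ℤ) (m+2)).Monic := monic_X.mul hm1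
      have hdmul : (X * dickson 1 (1:ℤ) (m+2)).natDegree = m + 3 := by
        rw [natDegree_mul X_ne_zero hm1.ne_zero, natDegree_X, hd1]; omega
      have hltn : (dickson 1 (1:ℤ) (m+1)).natDegree < (X * dickson 1 (1:ℤ) (m+2)).natDegree := by
        rw [hdmul, hd0]; omega
      have hlt : (dickson 1 (1:ℤ) (m+1)).degree < (X * dickson 1 (1:ℤ) (m+2)).degree :=
        degree_lt_degree hltn
      rw [key]
      exact ⟨hmul.sub_of_left hlt, by
        rw [natDegree_sub_eq_left_of_natDegree_lt hltn, hdmul]⟩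

lemma dickson_eval_two_cos (x : ℝ) (n : ℕ) :
    (dickson 1 (1:ℂ) n).eval (2 * Complex.cos x) = 2 * Complex.cos (n * x) := by
  set e : ℂ := Complex.exp (x * Complex.I) with he
  have h1 : e * e⁻¹ = 1 := mul_inv_cancel₀ (Complex.exp_ne_zero _)
  have hsum : e + e⁻¹ = 2 * Complex.cos x := by
    rw [he, ← Complex.exp_neg]
    simp [Complex.exp_mul_I, ← neg_mul, Complex.cos_neg, Complex.sin_neg]
    ring
  have hpow : e ^ n + (e⁻¹) ^ n = 2 * Complex.cos (n * x) := by
    rw [he, ← Complex.exp_neg, ← Complex.exp_nat_mul, ← Complex.exp_nat_mul]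
    have : Complex.exp ((n:ℂ) * (x * Complex.I)) = Complex.exp (((n:ℂ)*x) * Complex.I) := by
      ring_nf
    rw [this, show (n:ℂ) * -(x * Complex.I) = (-((n:ℂ)*x)) * Complex.I by ring,
      Complex.exp_mul_I, Complex.exp_mul_I]
    simp [Complex.cos_neg, Complex.sin_neg]
    ring
  rw [← hsum, dickson_one_one_eval_add_inv e e⁻¹ h1 n, hpow]

lemma dickson_cast_eval (n : ℕ) (y : ℚ) :
    ((eval y (dickson 1 (1:ℚ) n) : ℚ) : ℂ) = eval (y:ℂ) (dickson 1 (1:ℂ) n) := by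
  have h := map_dickson (R := ℚ) (S := ℂ) (k := 1) (a := 1) (algebraMap ℚ ℂ) n
  rw [map_one] at h
  have h2 : (algebraMap ℚ ℂ) (eval y (dickson 1 (1:ℚ) n)) =
      eval₂ (algebraMap ℚ ℂ) (algebraMap ℚ ℂ y) (dickson 1 (1:ℚ) n) :=
    (eval₂_at_apply _ _).symm
  rw [← eval_map, h] at h2
  simpa using h2

lemma dickson_map_int (n : ℕ) :
    (dickson 1 (1:ℤ) n).map (algebraMap ℤ ℚ) = dickson 1 (1:ℚ) n := by
  have h := map_dickson (R := ℤ) (S := ℚ) (k := 1) (a := 1) (algebraMap ℤ ℚ) n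
  rwa [map_one] at h

lemma niven_key (r s : ℚ) (hs : Real.cos (r * Real.pi) = s) :
    ∃ t : ℤ, (t : ℚ) = 2 * s := by
  obtain ⟨q, hq⟩ : ∃ q : ℕ, r.den = q + 1 :=
    Nat.exists_eq_succ_of_ne_zero r.den_nz
  set n : ℕ := q + 1 with hn
  have hC : Complex.cos ((r : ℝ) * Real.pi : ℝ) = ((s : ℝ) : ℂ) := by
    rw [← Complex.ofReal_cos, hs]
  have hnum : ((n : ℝ) * ((r:ℝ) * Real.pi) : ℝ) = (r.num : ℝ) * Real.pi := by
    have : ((r.den : ℚ)) * r = (r.num : ℚ) := by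
      rw [mul_comm]; exact_mod_cast Rat.mul_den_eq_num r
    have h2 : ((r.den : ℝ)) * (r:ℝ) = (r.num : ℝ) := by exact_mod_cast this
    rw [← hq, ← mul_assoc, h2]
  have hev : (dickson 1 (1:ℂ) n).eval (2 * ((s:ℝ):ℂ)) =
      2 * Complex.cos ((r.num : ℝ) * Real.pi : ℝ) := by
    rw [← hC, dickson_eval_two_cos ((r:ℝ) * Real.pi) n]
    norm_cast
    rw [hnum]
  have habs : |Real.cos ((r.num : ℝ) * Real.pi)| = 1 := Real.abs_cos_int_mul_pi r.num
  rw [← Complex.ofReal_cos] at hev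
  rcases (abs_eq (by norm_num : (0:ℝ) ≤ 1)).mp habs with hone | hone <;>
    rw [hone] at hev <;> norm_num at hev
  · -- cos = 1 case
    have hm : eval (2 * s) (dickson 1 (1:ℚ) n) = (2 : ℚ) := by
      have hcast := dickson_cast_eval n (2 * s)
      push_cast at hcast
      rw [hev] at hcast
      exact_mod_cast hcast
    have hint : IsIntegral ℤ (2 * s) := by
      refine ⟨dickson 1 (1:ℤ) n - C 2, ?_, ?_⟩
      · obtain ⟨hmo, hdeg⟩ := dickson_monic_deg q
        refine hmo.sub_of_left (lt_of_le_of_lt degree_C_le ?_)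
        rw [degree_eq_natDegree hmo.ne_zero, hdeg]
        exact_mod_cast Nat.succ_pos q
      · rw [eval₂_eq_eval_map, Polynomial.map_sub, dickson_map_int, map_C]
        simp [hm]
    obtain ⟨t, ht⟩ := IsIntegrallyClosed.isIntegral_iff.mp hint
    exact ⟨t, ht⟩
  · -- cos = -1 case
    have hm : eval (2 * s) (dickson 1 (1:ℚ) n) = (-2 : ℚ) := by
      have hcast := dickson_cast_eval n (2 * s)
      push_cast at hcast
      rw [hev] at hcast
      exact_mod_cast hcast
    have hint : IsIntegral ℤ (2 * s) := by
      refine ⟨dickson 1 (1:ℤ) n - C (-2), ?_, ?_⟩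
      · obtain ⟨hmo, hdeg⟩ := dickson_monic_deg q
        refine hmo.sub_of_left (lt_of_le_of_lt degree_C_le ?_)
        rw [degree_eq_natDegree hmo.ne_zero, hdeg]
        exact_mod_cast Nat.succ_pos q
      · rw [eval₂_eq_eval_map, Polynomial.map_sub, dickson_map_int, map_C]
        simp [hm]
    obtain ⟨t, ht⟩ := IsIntegrallyClosed.isIntegral_iff.mp hint
    exact ⟨t, ht⟩

theorem niven_variant (r : ℚ) (h0 : 0 ≤ r) (h1 : r ≤ 1/2) :
    ((∃ s : ℚ, Real.cos (r * Real.pi) = s) ↔ r = 0 ∨ r = 1/3 ∨ r = 1/2) ∧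
    Real.cos ((0 : ℝ) * Real.pi) = 1 ∧
    Real.cos ((1/3 : ℝ) * Real.pi) = 1/2 ∧
    Real.cos ((1/2 : ℝ) * Real.pi) = 0 := by
  have hpi := Real.pi_pos
  have c13 : Real.cos ((1/3 : ℝ) * Real.pi) = 1/2 := by
    rw [show (1/3 : ℝ) * Real.pi = Real.pi / 3 by ring, Real.cos_pi_div_three]
  have c12 : Real.cos ((1/2 : ℝ) * Real.pi) = 0 := by
    rw [show (1/2 : ℝ) * Real.pi = Real.pi / 2 by ring, Real.cos_pi_div_two]
  have c0 : Real.cos ((0 : ℝ) * Real.pi) = 1 := by simp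
  refine ⟨⟨?_, ?_⟩, c0, c13, c12⟩
  · rintro ⟨s, hs⟩
    obtain ⟨t, ht⟩ := niven_key r s hs
    -- bounds on cos
    have hr0 : (0:ℝ) ≤ (r:ℝ) := by exact_mod_cast h0
    have hr1 : (r:ℝ) ≤ 1/2 := by
      have := (Rat.cast_le (K := ℝ)).mpr h1
      push_cast at this; linarith
    have hmem : (r:ℝ) * Real.pi ∈ Set.Icc (-(Real.pi/2)) (Real.pi/2) := by
      constructor <;> nlinarith
    have hnn : 0 ≤ Real.cos ((r:ℝ) * Real.pi) := Real.cos_nonneg_of_mem_Icc hmem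
    have hle : Real.cos ((r:ℝ) * Real.pi) ≤ 1 := Real.cos_le_one _
    have hs0 : (0:ℚ) ≤ s := by rw [hs] at hnn; exact_mod_cast hnn
    have hs1 : s ≤ 1 := by rw [hs] at hle; exact_mod_cast hle
    have ht0 : (0:ℤ) ≤ t := by
      have : (0:ℚ) ≤ (t:ℚ) := by rw [ht]; linarith
      exact_mod_cast this
    have ht2 : t ≤ 2 := by
      have : (t:ℚ) ≤ 2 := by rw [ht]; linarith
      exact_mod_cast this
    have hmem' : (r:ℝ) * Real.pi ∈ Set.Icc (0:ℝ) Real.pi := by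
      constructor <;> nlinarith
    have hinj := Real.injOn_cos
    interval_cases t
    · -- t = 0 : s = 0, cos = 0, r = 1/2
      have hs' : s = 0 := by
        have : (0:ℚ) = 2 * s := ht
        linarith
      have hc : Real.cos ((r:ℝ) * Real.pi) = Real.cos ((1/2:ℝ) * Real.pi) := by
        rw [hs, hs', c12]; norm_num
      have hm2 : (1/2:ℝ) * Real.pi ∈ Set.Icc (0:ℝ) Real.pi := by
        constructor <;> nlinarith
      have := hinj hmem' hm2 hc
      right; right
      have h' : (r:ℝ) = 1/2 := by
        field_simp at this
        nlinarith [this]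
      have h'' : ((r:ℚ):ℝ) = ((1/2:ℚ):ℝ) := by push_cast; linarith
      exact Rat.cast_injective h''
    · -- t = 1 : s = 1/2, cos = 1/2, r = 1/3
      have hs' : s = 1/2 := by
        have : (1:ℚ) = 2 * s := ht
        linarith
      have hc : Real.cos ((r:ℝ) * Real.pi) = Real.cos ((1/3:ℝ) * Real.pi) := by
        rw [hs, hs', c13]; norm_num
      have hm2 : (1/3:ℝ) * Real.pi ∈ Set.Icc (0:ℝ) Real.pi := by
        constructor <;> nlinarith
      have := hinj hmem' hm2 hc
      right; left
      have h' : (r:ℝ) = 1/3 := by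
        have hne : Real.pi ≠ 0 := ne_of_gt hpi
        field_simp at this
        nlinarith [this]
      have h'' : ((r:ℚ):ℝ) = ((1/3:ℚ):ℝ) := by push_cast; linarith
      exact Rat.cast_injective h''
    · -- t = 2 : s = 1, cos = 1, r = 0
      have hs' : s = 1 := by
        have : (2:ℚ) = 2 * s := ht
        linarith
      have hc : Real.cos ((r:ℝ) * Real.pi) = Real.cos ((0:ℝ) * Real.pi) := by
        rw [hs, hs', c0]; norm_num
      have hm2 : (0:ℝ) * Real.pi ∈ Set.Icc (0:ℝ) Real.pi := by
        constructor <;> nlinarith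
      have := hinj hmem' hm2 hc
      left
      have h' : (r:ℝ) = 0 := by nlinarith [this]
      have h'' : ((r:ℚ):ℝ) = ((0:ℚ):ℝ) := by push_cast; linarith
      exact Rat.cast_injective h''
  · rintro (rfl | rfl | rfl)
    · exact ⟨1, by push_cast; simpa using c0⟩
    · exact ⟨1/2, by push_cast; simpa using c13⟩
    · exact ⟨0, by push_cast; simpa using c12⟩
end

section
/- For an integer k ≥ 3, cos(4π/(k+2)) is rational if and only if k ∈ {4, 6, 10}, with values cos(4π/6) = -1/2, cos(4π/8) = 0, and cos(4π/12) = 1/2. -/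
/-!
By Niven's theorem, the only rational multiples `r π` with `0 ≤ r ≤ 1` and rational cosine are
those with `r ∈ {0, 1/3, 1/2, 2/3, 1}`. For `n > 4` the angle `4π / n` lies in this range, and
`4 / n` is one of these values exactly when `n ∈ {6, 8, 12}`.
-/

open Real

lemma cos_four_pi_div_six : cos (4 * π / 6) = -(1 / 2) := by
  rw [show 4 * π / 6 = π - π / 3 by ring, cos_pi_sub, cos_pi_div_three]

lemma cos_four_pi_div_eight : cos (4 * π / 8) = 0 := by
  rw [show 4 * π / 8 = π / 2 by ring, cos_pi_div_two]

lemma cos_four_pi_div_twelve : cos (4 * π / 12) = 1 / 2 := by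
  rw [show 4 * π / 12 = π / 3 by ring, cos_pi_div_three]

lemma exists_rat_cos_four_pi_div_iff {n : ℤ} (hn : 4 < n) :
    (∃ s : ℚ, cos (4 * π / n) = s) ↔ n = 6 ∨ n = 8 ∨ n = 12 := by
  constructor
  · intro hrat
    have hn0 : (0 : ℚ) < n := by exact_mod_cast (by omega : (0 : ℤ) < n)
    rw [show 4 * π / n = ((4 / n : ℚ) : ℝ) * π by push_cast; ring] at hrat
    have hbnd : (4 / n : ℚ) ∈ Set.Icc 0 1 :=
      ⟨by positivity, (div_le_one hn0).2 (by exact_mod_cast hn.le)⟩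
    have hniven := niven_angle_div_pi_eq hrat hbnd
    simp only [Set.mem_insert_iff, Set.mem_singleton_iff] at hniven
    rcases hniven with h | h | h | h | h <;> field_simp at h <;> norm_cast at h <;> omega
  · rintro (rfl | rfl | rfl)
    · exact ⟨-(1 / 2), by push_cast; exact cos_four_pi_div_six⟩
    · exact ⟨0, by push_cast; exact cos_four_pi_div_eight⟩
    · exact ⟨1 / 2, by push_cast; exact cos_four_pi_div_twelve⟩

theorem cos_four_pi_div_rational_iff (k : ℤ) (hk : 3 ≤ k) :
    ((∃ s : ℚ, Real.cos (4 * Real.pi / ((k : ℝ) + 2)) = s) ↔ k = 4 ∨ k = 6 ∨ k = 10) ∧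
    Real.cos (4 * Real.pi / 6) = -(1/2) ∧
    Real.cos (4 * Real.pi / 8) = 0 ∧
    Real.cos (4 * Real.pi / 12) = 1/2 := by
  refine ⟨?_, cos_four_pi_div_six, cos_four_pi_div_eight, cos_four_pi_div_twelve⟩
  rw [show (k : ℝ) + 2 = ((k + 2 : ℤ) : ℝ) by push_cast; rfl,
    exists_rat_cos_four_pi_div_iff (by omega)]
  omega
end

section
/- cos(π/7) - cos(2π/7) + cos(3π/7) = 1/2. -/
theorem cos_identity_seven :
    Real.cos (Real.pi / 7) - Real.cos (2 * Real.pi / 7) + Real.cos (3 * Real.pi / 7) = 1/2 := by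
  have hpi := Real.pi_pos
  set x := Real.pi / 7 with hx
  have hsin : Real.sin x ≠ 0 := by
    apply ne_of_gt
    apply Real.sin_pos_of_pos_of_lt_pi
    · positivity
    · rw [hx]; linarith
  have h2 : (2 * Real.pi / 7 : ℝ) = 2 * x := by rw [hx]; ring
  have h3 : (3 * Real.pi / 7 : ℝ) = 3 * x := by rw [hx]; ring
  rw [h2, h3]
  have e1 := Real.sin_two_mul x
  have e2a := Real.sin_add (2*x) x
  have e2b := Real.sin_sub (2*x) x
  have e3a := Real.sin_add (3*x) x
  have e3b := Real.sin_sub (3*x) x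
  rw [show (2:ℝ)*x + x = 3*x by ring] at e2a
  rw [show (2:ℝ)*x - x = x by ring] at e2b
  rw [show (3:ℝ)*x + x = 4*x by ring] at e3a
  rw [show (3:ℝ)*x - x = 2*x by ring] at e3b
  have h6 : Real.sin (4*x) = Real.sin (3*x) := by
    rw [show (4:ℝ)*x = Real.pi - 3*x by rw [hx]; ring, Real.sin_pi_sub]
  have key : 2 * Real.sin x * (Real.cos x - Real.cos (2*x) + Real.cos (3*x)) = Real.sin x := by
    linarith [e1, e2a, e2b, e3a, e3b, h6]
  have h7 : Real.sin x * (2 * (Real.cos x - Real.cos (2*x) + Real.cos (3*x))) = Real.sin x * 1 := by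
    linarith [key]
  have h8 := mul_left_cancel₀ hsin h7
  linarith [h8]
end

section
/- cos(π/5) - cos(π/15) + cos(4π/15) = 1/2. -/
open Real

lemma sin_pi_div_ten : Real.sin (Real.pi / 10) = (Real.sqrt 5 - 1) / 4 := by
  have h2 : Real.cos (2 * (Real.pi / 10)) = 1 - 2 * Real.sin (Real.pi / 10) ^ 2 :=
    by rw [Real.cos_two_mul']; nlinarith [Real.sin_sq_add_cos_sq (Real.pi / 10)]
  have h5 : Real.cos (Real.pi / 5) = (1 + Real.sqrt 5) / 4 := Real.cos_pi_div_five
  have heq : (2 : ℝ) * (Real.pi / 10) = Real.pi / 5 := by ring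
  rw [heq, h5] at h2
  have hsq : Real.sqrt 5 ^ 2 = 5 := Real.sq_sqrt (by norm_num)
  have hs5 : (1:ℝ) ≤ Real.sqrt 5 := by nlinarith [Real.sqrt_nonneg 5]
  have hpos : 0 ≤ Real.sin (Real.pi / 10) := by
    apply Real.sin_nonneg_of_nonneg_of_le_pi
    · positivity
    · nlinarith [Real.pi_pos]
  nlinarith [Real.sin_le_one (Real.pi / 10)]

theorem cos_identity_fifteen_a :
    Real.cos (Real.pi / 5) - Real.cos (Real.pi / 15) + Real.cos (4 * Real.pi / 15) = 1/2 := by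
  have h : Real.cos (Real.pi / 15) - Real.cos (4 * Real.pi / 15) =
      -2 * Real.sin ((Real.pi / 15 + 4 * Real.pi / 15) / 2) *
        Real.sin ((Real.pi / 15 - 4 * Real.pi / 15) / 2) := Real.cos_sub_cos _ _
  have e1 : (Real.pi / 15 + 4 * Real.pi / 15) / 2 = Real.pi / 6 := by ring
  have e2 : (Real.pi / 15 - 4 * Real.pi / 15) / 2 = -(Real.pi / 10) := by ring
  rw [e1, e2, Real.sin_neg, Real.sin_pi_div_six, sin_pi_div_ten] at h
  rw [Real.cos_pi_div_five]
  linarith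
end

section
/- -cos(π/15) + cos(2π/15) + cos(4π/15) - cos(7π/15) = 1/2. -/
theorem cos_identity_fifteen_c :
    -Real.cos (Real.pi / 15) + Real.cos (2 * Real.pi / 15) + Real.cos (4 * Real.pi / 15)
      - Real.cos (7 * Real.pi / 15) = 1/2 := by
  have hs : Real.sqrt 5 ^ 2 = 5 := Real.sq_sqrt (by norm_num)
  set a := Real.cos (Real.pi / 15) with ha
  -- double angle chains
  have h2 : Real.cos (2 * Real.pi / 15) = 2 * a ^ 2 - 1 := by
    have e : 2 * Real.pi / 15 = 2 * (Real.pi / 15) := by ring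
    rw [e, Real.cos_two_mul]
  have h4 : Real.cos (4 * Real.pi / 15) = 2 * Real.cos (2 * Real.pi / 15) ^ 2 - 1 := by
    have e : 4 * Real.pi / 15 = 2 * (2 * Real.pi / 15) := by ring
    rw [e, Real.cos_two_mul]
  have h8 : Real.cos (8 * Real.pi / 15) = 2 * Real.cos (4 * Real.pi / 15) ^ 2 - 1 := by
    have e : 8 * Real.pi / 15 = 2 * (4 * Real.pi / 15) := by ring
    rw [e, Real.cos_two_mul]
  have h7 : Real.cos (7 * Real.pi / 15) = -Real.cos (8 * Real.pi / 15) := by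
    have e : 7 * Real.pi / 15 = Real.pi - 8 * Real.pi / 15 := by ring
    rw [e, Real.cos_pi_sub]
  -- triple angle: cos(π/5) = 4a³ - 3a
  have h3 : Real.cos (Real.pi / 5) = 4 * a ^ 3 - 3 * a := by
    have e : Real.pi / 5 = 3 * (Real.pi / 15) := by ring
    rw [e, Real.cos_three_mul]
  have hc : Real.cos (Real.pi / 5) = (1 + Real.sqrt 5) / 4 := Real.cos_pi_div_five
  have hQ : 4 * (4 * a ^ 3 - 3 * a) ^ 2 - 2 * (4 * a ^ 3 - 3 * a) - 1 = 0 := by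
    rw [← h3, hc]
    linear_combination hs / 4
  -- product to sum: cos(π/3) + cos(π/15) = 2 cos(π/5) cos(2π/15)
  have hsum : Real.cos (Real.pi / 3) + Real.cos (Real.pi / 15)
      = 2 * Real.cos (Real.pi / 5) * Real.cos (2 * Real.pi / 15) := by
    have e1 : Real.pi / 5 + 2 * Real.pi / 15 = Real.pi / 3 := by ring
    have e2 : Real.pi / 5 - 2 * Real.pi / 15 = Real.pi / 15 := by ring
    rw [← e1, ← e2, Real.cos_add, Real.cos_sub]; ring
  rw [Real.cos_pi_div_three, h3, h2, ← ha] at hsum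
  have hR : 16 * a ^ 5 - 20 * a ^ 3 + 5 * a - 1 / 2 = 0 := by linear_combination -hsum
  rw [h7, h8, h4, h2]
  linear_combination (2 * a ^ 2 - 1) * hQ + hR
end

section
/- Let k ≥ 2 be an integer, q = e^{2πi/(k+2)}, R̃ = diag(i q^{-1/2}, -i q^{1/2}), and F = (√q/(q+1))·[[-1, √(q+1/q+1)], [√(q+1/q+1), 1]]. Then the matrix A = R̃² F R̃⁴ F has trace tr(A) = -2 - 2cos(4π/(k+2)) + 2cos(2π/(k+2)). -/
/-!
Both powers of `R̃` are diagonal: `R̃² = -diag(q⁻¹, q)` and `R̃⁴ = diag(q⁻², q²)`. For diagonal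
`D, D'` and a symmetric `M`, `tr(D M D' M)` only involves the squares of the entries of `M`, so with
`t = q + q⁻¹` and `s² = t + 1` the trace is `-(√q/(q+1))² (q³ + q⁻³ + t s²) = -t(t-1)(t+2)/(t+2)`,
i.e. `t - t² = (q + q⁻¹) - (q² + q⁻²) - 2`; then `q^{±1}, q^{±2}` turn into cosines.
-/

open Complex Matrix

section TwoByTwo

variable {R : Type*} [CommRing R]

lemma pow_fin_two_diagonal (a b : R) (n : ℕ) :
    !![a, 0; 0, b] ^ n = !![a ^ n, 0; 0, b ^ n] := by
  induction n with
  | zero => exact (one_fin_two).trans (by simp)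
  | succ n ih => simp [pow_succ, ih]

lemma trace_diag_mul_symm_mul_diag_mul_symm (x₁ x₂ y₁ y₂ u v w : R) :
    trace (!![x₁, 0; 0, x₂] * !![u, v; v, w] * !![y₁, 0; 0, y₂] * !![u, v; v, w]) =
      x₁ * y₁ * u ^ 2 + (x₁ * y₂ + x₂ * y₁) * v ^ 2 + x₂ * y₂ * w ^ 2 := by
  simp [trace_fin_two]
  ring

end TwoByTwo

lemma trace_R_sq_mul_F_mul_R_pow_four_mul_F {K : Type*} [Field K] {i sq q s : K} (hi : i ^ 2 = -1)
    (hsq : sq ^ 2 = q) (hsq0 : sq ≠ 0) (hq1 : q + 1 ≠ 0) (hs : s ^ 2 = q + q⁻¹ + 1) :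
    trace (!![i * sq⁻¹, 0; 0, -i * sq] ^ 2 * ((sq / (q + 1)) • !![-1, s; s, 1]) *
        !![i * sq⁻¹, 0; 0, -i * sq] ^ 4 * ((sq / (q + 1)) • !![-1, s; s, 1])) =
      q + q⁻¹ - (q ^ 2 + (q ^ 2)⁻¹) - 2 := by
  have hq0 : q ≠ 0 := hsq ▸ pow_ne_zero 2 hsq0
  have hR2 : !![i * sq⁻¹, 0; 0, -i * sq] ^ 2 = !![-q⁻¹, 0; 0, -q] := by
    rw [pow_fin_two_diagonal, mul_pow, neg_mul, neg_pow_two, mul_pow, hi, inv_pow, hsq]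
    simp
  have hR4 : !![i * sq⁻¹, 0; 0, -i * sq] ^ 4 = !![(q ^ 2)⁻¹, 0; 0, q ^ 2] := by
    rw [show 4 = 2 * 2 by rfl, pow_mul, hR2, pow_fin_two_diagonal, neg_pow_two, neg_pow_two, inv_pow]
  have hc : sq / (q + 1) * (sq / (q + 1)) = q / (q + 1) ^ 2 := by
    rw [div_mul_div_comm, ← pow_two, ← pow_two, hsq]
  simp only [hR2, hR4, mul_smul_comm, smul_mul_assoc, smul_smul, trace_smul,
    trace_diag_mul_symm_mul_diag_mul_symm, hs, smul_eq_mul, hc]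
  field_simp
  ring

lemma two_mul_cos_eq_exp_add_inv (z : ℂ) : 2 * cos z = exp (z * I) + (exp (z * I))⁻¹ := by
  rw [two_cos, ← exp_neg, neg_mul]

lemma exp_mul_I_add_one_ne_zero {θ : ℝ} (h0 : 0 ≤ θ) (hπ : θ < Real.pi) :
    exp (θ * I) + 1 ≠ 0 := by
  intro h
  have hre := congrArg re h
  rw [add_re, exp_ofReal_mul_I_re, one_re, zero_re] at hre
  have hcos : Real.cos Real.pi < Real.cos θ := Real.cos_lt_cos_of_nonneg_of_le_pi h0 le_rfl hπ
  rw [Real.cos_pi] at hcos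
  linarith

theorem trace_A (k : ℕ) (hk : 2 ≤ k)
    (q : ℂ) (hq : q = Complex.exp (2 * Real.pi * Complex.I / ((k : ℂ) + 2)))
    (sq : ℂ) (hsq : sq = Complex.exp (Real.pi * Complex.I / ((k : ℂ) + 2)))
    (s : ℂ) (hs : s ^ 2 = q + q⁻¹ + 1)
    (R F A : Matrix (Fin 2) (Fin 2) ℂ)
    (hR : R = !![Complex.I * sq⁻¹, 0; 0, -Complex.I * sq])
    (hF : F = (sq / (q + 1)) • !![-1, s; s, 1])
    (hA : A = R ^ 2 * F * R ^ 4 * F) :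
    A.trace = -2 - 2 * Real.cos (4 * Real.pi / ((k : ℝ) + 2))
      + 2 * Real.cos (2 * Real.pi / ((k : ℝ) + 2)) := by
  set θ : ℝ := 2 * Real.pi / ((k : ℝ) + 2) with hθ
  have hqθ : q = exp (θ * I) := by rw [hq, hθ]; push_cast; ring_nf
  have hq2 : q ^ 2 = exp (2 * θ * I) := by rw [hqθ, ← exp_nat_mul]; push_cast; ring_nf
  have hsq2 : sq ^ 2 = q := by rw [hsq, hq, ← exp_nat_mul]; ring_nf
  have hθπ : θ < Real.pi := by
    rw [hθ, div_lt_iff₀ (by positivity)]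
    nlinarith [mul_pos Real.pi_pos (by exact_mod_cast (by omega : 0 < k) : (0 : ℝ) < k)]
  have hq1 : q + 1 ≠ 0 := hqθ ▸ exp_mul_I_add_one_ne_zero (by positivity) hθπ
  rw [hA, hR, hF, trace_R_sq_mul_F_mul_R_pow_four_mul_F I_sq hsq2 (hsq ▸ exp_ne_zero _) hq1 hs,
    show 4 * Real.pi / ((k : ℝ) + 2) = 2 * θ by rw [hθ]; ring]
  push_cast
  rw [two_mul_cos_eq_exp_add_inv, two_mul_cos_eq_exp_add_inv, ← hqθ, ← hq2]
  ring
end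

section
/- For every integer k ≥ 3 with k ≠ 4 and k ≠ 8, there is no rational multiple θ of π such that cos(4π/(k+2)) - cos(2π/(k+2)) + cos(θ) = -1. In other words, if θ ∈ [0, π] satisfies cos(θ) = -1 - cos(4π/(k+2)) + cos(2π/(k+2)), then θ/π is irrational. -/
set_option maxHeartbeats 1000000

open Polynomial

lemma exists_good_j (n : ℕ) (h5 : 5 ≤ n) (h6 : n ≠ 6) (h10 : n ≠ 10) :
    ∃ j : ℕ, Nat.Coprime j n ∧ n < 3 * j ∧ 2 * j ≤ n := by
  rcases Nat.even_or_odd n with he | ho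
  · obtain ⟨m, rfl⟩ := he
    rcases Nat.even_or_odd m with hme | hmo
    · obtain ⟨l, rfl⟩ := hme
      refine ⟨l + l - 1, ?_, by omega, by omega⟩
      have h2 : Nat.Coprime (l + l - 1) 2 :=
        Odd.coprime_two_right ⟨l - 1, by omega⟩
      have hm : Nat.Coprime (l + l - 1) (l + l) := by
        have hm' : Nat.Coprime (l + l - 1) (1 + (l + l - 1)) :=
          Nat.coprime_add_self_right.mpr (Nat.coprime_one_right _)
        rwa [show 1 + (l + l - 1) = l + l from by omega] at hm'
      have := h2.mul_right hm
      rwa [show 2 * (l + l) = (l + l) + (l + l) from by ring] at this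
    · obtain ⟨l, rfl⟩ := hmo
      refine ⟨2 * l - 1, ?_, by omega, by omega⟩
      have h2 : Nat.Coprime (2 * l - 1) 2 :=
        Odd.coprime_two_right ⟨l - 1, by omega⟩
      have hm : Nat.Coprime (2 * l - 1) (2 * l + 1) := by
        have hm' : Nat.Coprime (2 * l - 1) (2 + (2 * l - 1)) :=
          Nat.coprime_add_self_right.mpr h2
        rwa [show 2 + (2 * l - 1) = 2 * l + 1 from by omega] at hm'
      have := h2.mul_right hm
      rwa [show 2 * (2 * l + 1) = (2 * l + 1) + (2 * l + 1) from by ring] at this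
  · obtain ⟨m, rfl⟩ := ho
    refine ⟨m, ?_, by omega, by omega⟩
    have h : 2 * m + 1 = 1 + m * 2 := by ring
    rw [h]
    exact (Nat.coprime_add_mul_left_right m 1 2).mpr (Nat.coprime_one_right _)

lemma pair_cos (M : ℕ) (hM : 0 < M) (t c : ℕ) (hc : c ≤ M) :
    (Complex.exp (2 * Real.pi * Complex.I / M)) ^ (t * c) +
      (Complex.exp (2 * Real.pi * Complex.I / M)) ^ (t * (M - c)) =
      ((2 * Real.cos (2 * Real.pi * t * c / M) : ℝ) : ℂ) := by
  have hM' : (M : ℂ) ≠ 0 := Nat.cast_ne_zero.mpr hM.ne'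
  have hexp : ∀ d : ℕ, (Complex.exp (2 * Real.pi * Complex.I / M)) ^ d
      = Complex.exp (((2 * Real.pi * d / M : ℝ) : ℂ) * Complex.I) := by
    intro d
    rw [← Complex.exp_nat_mul]
    congr 1
    push_cast
    field_simp
  rw [hexp, hexp]
  have hsub : ((t * (M - c) : ℕ) : ℝ) = (t : ℝ) * M - t * c := by
    push_cast [Nat.cast_sub hc]
    ring
  have key2 : ((2 * Real.pi * (t * (M - c) : ℕ) / M : ℝ) : ℂ) * Complex.I
      = -(((2 * Real.pi * (t * c : ℕ) / M : ℝ) : ℂ) * Complex.I)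
        + (t : ℂ) * (2 * Real.pi * Complex.I) := by
    rw [hsub]
    push_cast
    field_simp
    ring
  rw [key2, Complex.exp_add, Complex.exp_nat_mul_two_pi_mul_I, mul_one]
  set x : ℝ := 2 * Real.pi * (t * c : ℕ) / M with hx
  have h2c : Complex.exp ((x : ℂ) * Complex.I) + Complex.exp (-((x : ℂ) * Complex.I))
      = 2 * Complex.cos (x : ℂ) := by
    rw [Complex.exp_mul_I, ← neg_mul, Complex.exp_mul_I]
    simp [Complex.cos_neg, Complex.sin_neg]
    ring
  rw [h2c, ← Complex.ofReal_cos]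
  push_cast
  congr 2
  rw [hx]
  push_cast
  ring

theorem theta_A_irrational (k : ℤ) (hk : 3 ≤ k) (h4 : k ≠ 4) (h8 : k ≠ 8)
    (θ : ℝ) (h0 : 0 ≤ θ) (h1 : θ ≤ Real.pi)
    (hθ : Real.cos θ = -1 - Real.cos (4 * Real.pi / ((k : ℝ) + 2))
      + Real.cos (2 * Real.pi / ((k : ℝ) + 2))) :
    Irrational (θ / Real.pi) := by
  have hπ := Real.pi_pos
  set n : ℕ := (k + 2).toNat with hndef
  have hn5 : 5 ≤ n := by omega
  have hn6 : n ≠ 6 := by omega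
  have hn10 : n ≠ 10 := by omega
  have hnR : ((n : ℝ)) = (k : ℝ) + 2 := by
    have h : ((n : ℤ)) = k + 2 := by omega
    exact_mod_cast congrArg (Int.cast : ℤ → ℝ) h
  have hnR0 : (0:ℝ) < n := by positivity
  rintro ⟨r, hr⟩
  rw [eq_div_iff Real.pi_ne_zero] at hr
  -- hr : ↑r * π = θ
  set q : ℕ := r.den with hqdef
  have hq0 : 0 < q := r.pos
  have hqR0 : (0:ℝ) < q := by positivity
  set p : ℤ := r.num with hpdef
  have hrpq : (r : ℝ) = (p : ℝ) / q := by
    rw [Rat.cast_def]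
  set M : ℕ := 2 * q * n with hMdef
  have hM0 : 0 < M := by positivity
  haveI : NeZero M := ⟨hM0.ne'⟩
  have hMR : (M : ℝ) = 2 * q * n := by push_cast [hMdef]; ring
  have hMR0 : (0:ℝ) < M := by positivity
  have h2qM : 2 * q ≤ M := by
    calc 2 * q = 2 * q * 1 := by ring
    _ ≤ 2 * q * n := Nat.mul_le_mul_left _ (by omega)
  have h4qM : 4 * q ≤ M := by
    calc 4 * q ≤ 2 * q * 5 := by omega
    _ ≤ 2 * q * n := Nat.mul_le_mul_left _ (by omega)
  set ζ : ℂ := Complex.exp (2 * Real.pi * Complex.I / M) with hζdef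
  have hζ : IsPrimitiveRoot ζ M := Complex.isPrimitiveRoot_exp M hM0.ne'
  -- the exponent for θ
  set a₀ : ℕ := ((p * n) % (M : ℤ)).toNat with ha₀def
  have ha₀cast : (a₀ : ℤ) = (p * n) % (M : ℤ) :=
    Int.toNat_of_nonneg (Int.emod_nonneg _ (by exact_mod_cast hM0.ne'))
  have ha₀M : a₀ < M := by
    have := Int.emod_lt_of_pos (p * n) (b := (M:ℤ)) (by exact_mod_cast hM0)
    omega
  set s : ℤ := (p * n) / (M : ℤ) with hsdef
  have ha₀R : (a₀ : ℝ) = (p : ℝ) * n - M * s := by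
    have h := Int.emod_def (p * (n:ℤ)) (M : ℤ)
    have h2 : (a₀ : ℤ) = p * n - M * s := by rw [ha₀cast, h]
    exact_mod_cast congrArg (Int.cast : ℤ → ℝ) h2
  have hcosθ : Real.cos (2 * Real.pi * ((1:ℕ):ℝ) * (a₀:ℝ) / (M:ℝ)) = Real.cos θ := by
    have hang : 2 * Real.pi * ((1:ℕ):ℝ) * (a₀:ℝ) / (M:ℝ) = θ + ((-s : ℤ) : ℝ) * (2 * Real.pi) := by
      rw [ha₀R, ← hr, hrpq, hMR]
      push_cast
      field_simp
      ring
    rw [hang]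
    exact Real.cos_add_int_mul_two_pi θ (-s)
  -- the polynomial
  set P : ℚ[X] := X ^ a₀ + X ^ (M - a₀) + X ^ (4 * q) + X ^ (M - 4 * q)
      - X ^ (2 * q) - X ^ (M - 2 * q) + C 2 with hPdef
  have hcosB : Real.cos (2 * Real.pi * ((1:ℕ):ℝ) * ((4*q:ℕ):ℝ) / (M:ℝ))
      = Real.cos (4 * Real.pi / ((k:ℝ) + 2)) := by
    congr 1
    rw [hMR, ← hnR]
    push_cast
    field_simp
  have hcosC : Real.cos (2 * Real.pi * ((1:ℕ):ℝ) * ((2*q:ℕ):ℝ) / (M:ℝ))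
      = Real.cos (2 * Real.pi / ((k:ℝ) + 2)) := by
    congr 1
    rw [hMR, ← hnR]
    push_cast
    field_simp
  have hPζ : aeval ζ P = 0 := by
    have e1 := pair_cos M hM0 1 a₀ ha₀M.le
    have e2 := pair_cos M hM0 1 (4 * q) h4qM
    have e3 := pair_cos M hM0 1 (2 * q) h2qM
    simp only [one_mul] at e1 e2 e3
    simp only [hPdef, map_add, map_sub, map_pow, aeval_X, aeval_C]
    rw [show ((algebraMap ℚ ℂ) 2 : ℂ) = ((2:ℝ):ℂ) from by norm_num]
    have : (ζ ^ a₀ + ζ ^ (M - a₀)) + (ζ ^ (4*q) + ζ ^ (M - 4*q))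
        - (ζ ^ (2*q) + ζ ^ (M - 2*q)) + ((2:ℝ):ℂ) = 0 := by
      rw [hζdef, e1, e2, e3, ← Complex.ofReal_add, ← Complex.ofReal_sub, ← Complex.ofReal_add,
        Complex.ofReal_eq_zero]
      push_cast at hcosθ hcosB hcosC
      push_cast
      rw [hcosθ, hcosB, hcosC, hθ]
      ring
    rw [← this]
    push_cast
    ring
  -- divisibility by the cyclotomic polynomial
  have hcyc : Polynomial.cyclotomic M ℚ = minpoly ℚ ζ :=
    Polynomial.cyclotomic_eq_minpoly_rat hζ hM0
  have hdvd : minpoly ℚ ζ ∣ P := minpoly.dvd ℚ ζ hPζ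
  rw [← hcyc] at hdvd
  obtain ⟨Q, hQ⟩ := hdvd
  -- choose conjugate exponent t
  obtain ⟨j, hjn, hj3, hj2⟩ := exists_good_j n hn5 hn6 hn10
  have hndvdM : n ∣ M := Dvd.intro_left (2 * q) rfl
  obtain ⟨u, hu⟩ := ZMod.unitsMap_surjective hndvdM (ZMod.unitOfCoprime j hjn)
  set t : ℕ := (u : ZMod M).val with htdef
  have htM : Nat.Coprime t M := ZMod.val_coe_unit_coprime u
  have h1 : ((t : ℕ) : ZMod M) = (u : ZMod M) := by
    rw [htdef, ZMod.natCast_val, ZMod.cast_id]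
  have h2 : ((t : ℕ) : ZMod n) = (j : ZMod n) := by
    have h3 := congrArg (fun v : (ZMod n)ˣ => (v : ZMod n)) hu
    simp only [ZMod.coe_unitOfCoprime] at h3
    calc ((t : ℕ) : ZMod n) = ZMod.castHom hndvdM (ZMod n) ((t : ℕ) : ZMod M) :=
          (map_natCast _ t).symm
      _ = ZMod.castHom hndvdM (ZMod n) (u : ZMod M) := by rw [h1]
      _ = (j : ZMod n) := h3
  have hmod : t ≡ j [MOD n] := (ZMod.natCast_eq_natCast_iff t j n).mp h2
  obtain ⟨s₂, hs₂⟩ : ∃ s₂ : ℤ, (t : ℤ) = j + n * s₂ := by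
    have hdd := (Nat.modEq_iff_dvd).mp hmod.symm
    obtain ⟨c, hc⟩ := hdd
    exact ⟨c, by omega⟩
  have htR : (t : ℝ) = (j : ℝ) + n * s₂ := by exact_mod_cast congrArg (Int.cast : ℤ → ℝ) hs₂
  -- evaluate P at ζ ^ t
  set ξ : ℂ := ζ ^ t with hξdef
  have hξ : IsPrimitiveRoot ξ M := hζ.pow_of_coprime t htM
  have hPξ : aeval ξ P = 0 := by
    rw [hQ, map_mul]
    have hz : (aeval ξ) (Polynomial.cyclotomic M ℚ) = 0 := by
      have hroot := hξ.isRoot_cyclotomic hM0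
      rw [Polynomial.aeval_def, ← Polynomial.eval_map, Polynomial.map_cyclotomic]
      exact hroot
    rw [hz, zero_mul]
  -- turn it into a real equation
  set c : ℝ := Real.cos (2 * Real.pi * j / n) with hcdef
  have hcosC' : Real.cos (2 * Real.pi * (t:ℝ) * ((2*q:ℕ):ℝ) / (M:ℝ)) = c := by
    have hang : 2 * Real.pi * (t:ℝ) * ((2*q:ℕ):ℝ) / (M:ℝ)
        = 2 * Real.pi * j / n + s₂ * (2 * Real.pi) := by
      rw [htR, hMR]
      push_cast
      field_simp
    rw [hang, Real.cos_add_int_mul_two_pi]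
  have hcosB' : Real.cos (2 * Real.pi * (t:ℝ) * ((4*q:ℕ):ℝ) / (M:ℝ)) = 2 * c ^ 2 - 1 := by
    have hang : 2 * Real.pi * (t:ℝ) * ((4*q:ℕ):ℝ) / (M:ℝ)
        = 2 * (2 * Real.pi * j / n + s₂ * (2 * Real.pi)) := by
      rw [htR, hMR]
      push_cast
      field_simp
      ring
    rw [hang, Real.cos_two_mul, Real.cos_add_int_mul_two_pi]
  have hreal : 2 * Real.cos (2 * Real.pi * (t:ℝ) * (a₀:ℝ) / (M:ℝ))
      + 2 * (2 * c ^ 2 - 1) - 2 * c + 2 = 0 := by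
    have e1 := pair_cos M hM0 t a₀ ha₀M.le
    have e2 := pair_cos M hM0 t (4 * q) h4qM
    have e3 := pair_cos M hM0 t (2 * q) h2qM
    have hexpand : (ξ ^ a₀ + ξ ^ (M - a₀)) + (ξ ^ (4*q) + ξ ^ (M - 4*q))
        - (ξ ^ (2*q) + ξ ^ (M - 2*q)) + ((2:ℝ):ℂ) = 0 := by
      have := hPξ
      simp only [hPdef, map_add, map_sub, map_pow, aeval_X, aeval_C] at this
      rw [show ((algebraMap ℚ ℂ) 2 : ℂ) = ((2:ℝ):ℂ) from by norm_num] at this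
      rw [← this]
      push_cast
      ring
    rw [hξdef] at hexpand
    simp only [← pow_mul] at hexpand
    rw [hζdef, e1, e2, e3, ← Complex.ofReal_add, ← Complex.ofReal_sub, ← Complex.ofReal_add,
      Complex.ofReal_eq_zero] at hexpand
    push_cast at hcosB' hcosC'
    push_cast at hexpand
    rw [hcosB', hcosC'] at hexpand
    linarith [hexpand]
  -- the inequality
  have hc12 : c < -(1/2) := by
    have hb1 : 2 * Real.pi / 3 < 2 * Real.pi * j / n := by
      rw [div_lt_div_iff₀ (by norm_num) hnR0]
      have : (n : ℝ) < 3 * j := by exact_mod_cast hj3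
      nlinarith
    have hb2 : 2 * Real.pi * j / n ≤ Real.pi := by
      rw [div_le_iff₀ hnR0]
      have : 2 * (j:ℝ) ≤ n := by exact_mod_cast hj2
      nlinarith
    have hlt := Real.cos_lt_cos_of_nonneg_of_le_pi (by positivity) hb2 hb1
    have hval : Real.cos (2 * Real.pi / 3) = -(1/2) := by
      rw [show 2 * Real.pi / 3 = Real.pi - Real.pi / 3 from by ring, Real.cos_pi_sub,
        Real.cos_pi_div_three]
    rw [hcdef]
    rw [hval] at hlt
    linarith
  have hge := Real.neg_one_le_cos (2 * Real.pi * (t:ℝ) * (a₀:ℝ) / (M:ℝ))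
  nlinarith [hreal, hge, hc12]
end

section
/- For every integer k ≥ 3 with k ≠ 4 and k ≠ 8, if θ ∈ [0, π] satisfies cos(θ) = -1 + cos(6π/(k+2)) - cos(4π/(k+2)) + 2cos(2π/(k+2)), then θ/π is irrational. -/
/-!
If `θ = π p / q`, put `n = k + 2`, `N = 2 q n` and `γ = 2π / N`. The hypothesis is then a
`ℚ`-linear relation among the numbers `cos (j γ)`, i.e. a rational polynomial vanishing at the
primitive `N`-th root of unity `exp (i γ)`. It therefore vanishes at every conjugate
`exp (i t γ)` with `t` coprime to `N`, which replaces `2π / n` by `2π t / n` and `θ` by `t θ`.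
Unless `n ∈ {6, 10}` there is `r` coprime to `n` with `2π r / n ∈ [5π/7, π]`, and `t` can be taken
`≡ r (mod n)`. The right-hand side equals `4c³ - 2c² - c` with `c = cos (2π r / n) ≤ -0.61`,
which is `< -1`, while the left-hand side is a cosine.
-/

open Polynomial Real

/-- At an `N`-th root of unity `X ^ ((N - 1) * m)` evaluates to `X ^ (-m)`. -/
noncomputable def cosPoly {ι : Type*} [Fintype ι] (c : ι → ℚ) (m : ι → ℕ) (N : ℕ) : ℚ[X] :=
  ∑ i, C (c i) * (X ^ m i + X ^ ((N - 1) * m i))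

lemma exp_mul_I_pow_add_pow_eq_two_cos {N : ℕ} (hN : 0 < N) {φ : ℝ}
    (hφ : Complex.exp (φ * Complex.I) ^ N = 1) (m : ℕ) :
    Complex.exp (φ * Complex.I) ^ m + Complex.exp (φ * Complex.I) ^ ((N - 1) * m)
      = 2 * cos (m * φ) := by
  set z := Complex.exp (φ * Complex.I)
  have hzm : z ^ m = Complex.exp ((m * φ : ℝ) * Complex.I) := by
    rw [← Complex.exp_nat_mul]; push_cast; ring_nf
  have hinv : z ^ ((N - 1) * m) = (z ^ m)⁻¹ := by
    refine eq_inv_of_mul_eq_one_left ?_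
    rw [← pow_add, ← add_one_mul, Nat.sub_one_add_one hN.ne', pow_mul, hφ, one_pow]
  rw [hinv, hzm, ← Complex.exp_neg, Complex.ofReal_cos, Complex.two_cos, neg_mul]

lemma aeval_cosPoly {ι : Type*} [Fintype ι] (c : ι → ℚ) (m : ι → ℕ) {N : ℕ} (hN : 0 < N)
    {φ : ℝ} (hφ : Complex.exp (φ * Complex.I) ^ N = 1) :
    aeval (Complex.exp (φ * Complex.I)) (cosPoly c m N)
      = 2 * ((∑ i, c i * cos (m i * φ) : ℝ) : ℂ) := by
  simp only [cosPoly, map_sum, map_mul, aeval_C, map_add, map_pow, aeval_X,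
    exp_mul_I_pow_add_pow_eq_two_cos hN hφ, Complex.ofReal_sum, Complex.ofReal_mul,
    Finset.mul_sum, eq_ratCast, Complex.ofReal_ratCast]
  exact Finset.sum_congr rfl fun i _ ↦ by ring

theorem sum_cos_mul_eq_zero_of_coprime {ι : Type*} [Fintype ι] (c : ι → ℚ) (m : ι → ℕ)
    {N t : ℕ} (hN : 0 < N) (ht : t.Coprime N)
    (h : ∑ i, c i * cos (m i * (2 * π / N)) = 0) :
    ∑ i, c i * cos (m i * (t * (2 * π / N))) = 0 := by
  set ζ := Complex.exp ((2 * π / N : ℝ) * Complex.I)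
  have hζ : IsPrimitiveRoot ζ N := by
    convert Complex.isPrimitiveRoot_exp N hN.ne' using 2
    push_cast; ring
  have hζt : ζ ^ t = Complex.exp ((t * (2 * π / N) : ℝ) * Complex.I) := by
    rw [← Complex.exp_nat_mul]; push_cast; ring_nf
  have hroot : aeval ζ (cosPoly c m N) = 0 := by
    rw [aeval_cosPoly c m hN hζ.pow_eq_one, h]; simp
  have hdvd : cyclotomic N ℚ ∣ cosPoly c m N := by
    rw [cyclotomic_eq_minpoly_rat hζ hN]; exact minpoly.dvd ℚ ζ hroot
  have hroot_t : aeval (ζ ^ t) (cosPoly c m N) = 0 := by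
    refine aeval_eq_zero_of_dvd_aeval_eq_zero hdvd ?_
    rw [aeval_def, ← eval_map, map_cyclotomic]
    exact (hζ.pow_of_coprime t ht).isRoot_cyclotomic hN
  rw [hζt, aeval_cosPoly c m hN (hζt ▸ (hζ.pow_of_coprime t ht).pow_eq_one)] at hroot_t
  exact_mod_cast (mul_eq_zero.mp hroot_t).resolve_left two_ne_zero

noncomputable def cosThetaB (α : ℝ) : ℝ := -1 + cos (3 * α) - cos (2 * α) + 2 * cos α

lemma cosThetaB_eq (α : ℝ) : cosThetaB α = 4 * cos α ^ 3 - 2 * cos α ^ 2 - cos α := by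
  rw [cosThetaB, cos_three_mul, cos_two_mul]; ring

lemma cos_mul_sub_cosThetaB_mul (a b : ℕ) (γ : ℝ) :
    cos (b * γ) - cosThetaB (a * γ) = ∑ i, ((![1, 1, -1, 1, -2] : Fin 5 → ℚ) i : ℝ)
      * cos ((![b, 0, 3 * a, 2 * a, a] : Fin 5 → ℕ) i * γ) := by
  simp only [Fin.sum_univ_five, Matrix.cons_val, cosThetaB]
  push_cast
  rw [zero_mul, cos_zero, mul_assoc 3, mul_assoc 2]
  ring

lemma cos_two_pi_div_seven_ge : (0.61 : ℝ) ≤ cos (2 * π / 7) := by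
  have hπ := pi_pos
  set c := cos (2 * π / 7)
  -- `cos (6π/7) = cos (8π/7)` makes `c` a root of `(c - 1) (8c³ + 4c² - 4c - 1)`.
  have h3 : cos (3 * (2 * π / 7)) = cos (2 * (2 * (2 * π / 7))) := by
    rw [← cos_two_pi_sub]; ring_nf
  rw [cos_three_mul, cos_two_mul, cos_two_mul] at h3
  have hc1 : c < 1 := by
    simpa using cos_lt_cos_of_nonneg_of_le_pi le_rfl (by linarith) (by positivity : 0 < 2 * π / 7)
  have hc0 : 0 < c := cos_pos_of_mem_Ioo ⟨by linarith, by linarith⟩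
  have hcubic : 8 * c ^ 3 + 4 * c ^ 2 - 4 * c - 1 = 0 := by
    have : (c - 1) * (8 * c ^ 3 + 4 * c ^ 2 - 4 * c - 1) = 0 := by linear_combination -h3
    exact (mul_eq_zero.mp this).resolve_left (by linarith)
  nlinarith [sq_nonneg c]

lemma cosThetaB_lt_neg_one {α : ℝ} (h : cos α ≤ -0.61) : cosThetaB α < -1 := by
  rw [cosThetaB_eq]
  nlinarith [neg_one_le_cos α, sq_nonneg (2 * cos α - 1.11)]

lemma cos_two_pi_mul_div_le {r n : ℕ} (hn : 0 < n) (h5 : 5 * n ≤ 14 * r) (h2 : 2 * r ≤ n) :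
    cos (r * (2 * π / n)) ≤ -0.61 := by
  have hπ := pi_pos
  have hnR : (0 : ℝ) < n := by exact_mod_cast hn
  have h5' : (5 : ℝ) * n ≤ 14 * r := by exact_mod_cast h5
  have h2' : (2 : ℝ) * r ≤ n := by exact_mod_cast h2
  have hlo : π - 2 * π / 7 ≤ r * (2 * π / n) := by
    rw [mul_div_assoc', le_div_iff₀ hnR]; nlinarith
  have hhi : r * (2 * π / n) ≤ π := by
    rw [mul_div_assoc', div_le_iff₀ hnR]; nlinarith
  have := cos_le_cos_of_nonneg_of_le_pi (by linarith) hhi hlo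
  rw [cos_pi_sub] at this
  linarith [cos_two_pi_div_seven_ge]

lemma exists_coprime_five_mul_le_fourteen_mul {n : ℕ} (h5 : 5 ≤ n) (h6 : n ≠ 6) (h10 : n ≠ 10) :
    ∃ r, r.Coprime n ∧ 5 * n ≤ 14 * r ∧ 2 * r ≤ n := by
  have coprime_of_bezout {r : ℕ} (x y : ℤ) (h : x * r + y * n = 1) : r.Coprime n :=
    Nat.isCoprime_iff_coprime.mp ⟨x, y, h⟩
  obtain ⟨m, rfl⟩ | ⟨j, rfl⟩ | ⟨u, rfl⟩ :
      (∃ m, n = 2 * m + 1) ∨ (∃ j, n = 4 * j + 4) ∨ ∃ u, n = 4 * u + 14 := by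
    rcases Nat.even_or_odd' n with ⟨m, rfl | rfl⟩
    · rcases Nat.even_or_odd' m with ⟨j, rfl | rfl⟩
      · exact .inr (.inl ⟨j - 1, by omega⟩)
      · exact .inr (.inr ⟨j - 3, by omega⟩)
    · exact .inl ⟨m, rfl⟩
  · exact ⟨m, coprime_of_bezout (-2) 1 (by push_cast; ring), by omega, by omega⟩
  · exact ⟨2 * j + 1, coprime_of_bezout (-(2 * j + 3)) (j + 1) (by push_cast; ring),
      by omega, by omega⟩
  · exact ⟨2 * u + 5, coprime_of_bezout (-(2 * u ^ 2 + 14 * u + 25)) ((u + 3) ^ 2)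
      (by push_cast; ring), by omega, by omega⟩

lemma exists_coprime_modEq_of_dvd {n N r : ℕ} (hN : N ≠ 0) (hnN : n ∣ N) (hr : r.Coprime n) :
    ∃ t, t.Coprime N ∧ t ≡ r [MOD n] := by
  have : NeZero N := ⟨hN⟩
  obtain ⟨u, hu⟩ := ZMod.unitsMap_surjective hnN (ZMod.unitOfCoprime r hr)
  refine ⟨(u : ZMod N).val, ZMod.val_coe_unit_coprime u, ?_⟩
  rw [← ZMod.natCast_eq_natCast_iff, ← ZMod.coe_unitOfCoprime r hr, ← hu, ZMod.unitsMap_val,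
    ZMod.natCast_val]

lemma cos_mul_two_pi_div_eq_of_modEq {a b n : ℕ} (h : a ≡ b [MOD n]) :
    cos (a * (2 * π / n)) = cos (b * (2 * π / n)) := by
  rcases n.eq_zero_or_pos with rfl | hn
  · simp
  have hmod (a : ℕ) : cos (a * (2 * π / n)) = cos ((a % n : ℕ) * (2 * π / n)) := by
    rw [← cos_add_nat_mul_two_pi ((a % n : ℕ) * (2 * π / n)) (a / n)]
    congr 1
    have e : ((a % n : ℕ) : ℝ) + n * (a / n : ℕ) = a := by exact_mod_cast Nat.mod_add_div a n
    rw [← e]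
    field_simp
  rw [hmod a, hmod b, h]

lemma cos_mul_eq_cosThetaB_mul_of_coprime {a b N t : ℕ} (hN : 0 < N) (ht : t.Coprime N)
    (h : cos (b * (2 * π / N)) = cosThetaB (a * (2 * π / N))) :
    cos (b * (t * (2 * π / N))) = cosThetaB (a * (t * (2 * π / N))) := by
  rw [← sub_eq_zero, cos_mul_sub_cosThetaB_mul] at h ⊢
  exact sum_cos_mul_eq_zero_of_coprime _ _ hN ht h

theorem theta_B_irrational_general (k : ℤ) (hk : 3 ≤ k) (h4 : k ≠ 4) (h8 : k ≠ 8)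
    (θ : ℝ)
    (hθ : Real.cos θ = -1 + Real.cos (6 * Real.pi / ((k : ℝ) + 2))
      - Real.cos (4 * Real.pi / ((k : ℝ) + 2))
      + 2 * Real.cos (2 * Real.pi / ((k : ℝ) + 2))) :
    Irrational (θ / Real.pi) := by
  rintro ⟨s, hs⟩
  obtain ⟨p, q, hq, hθpq⟩ : ∃ p q : ℕ, 0 < q ∧ |θ| = p / q * π := by
    refine ⟨s.num.natAbs, s.den, s.pos, ?_⟩
    rw [eq_div_iff pi_ne_zero] at hs
    rw [← hs, abs_mul, abs_of_pos pi_pos, Rat.cast_def, abs_div, Nat.abs_cast, Nat.cast_natAbs,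
      Int.cast_abs]
  obtain ⟨n, rfl⟩ : ∃ n : ℕ, k = n - 2 := ⟨(k + 2).toNat, by omega⟩
  obtain ⟨r, hrn, h5r, h2r⟩ :=
    exists_coprime_five_mul_le_fourteen_mul (n := n) (by omega) (by omega) (by omega)
  have hn : 0 < n := by omega
  have hN : 0 < 2 * q * n := by positivity
  obtain ⟨t, htN, htr⟩ := exists_coprime_modEq_of_dvd hN.ne' (dvd_mul_left n (2 * q)) hrn
  have hθ' : cos ((p * n : ℕ) * (2 * π / (2 * q * n : ℕ)))
      = cosThetaB ((2 * q : ℕ) * (2 * π / (2 * q * n : ℕ))) := by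
    rw [← cos_abs θ, hθpq] at hθ
    convert hθ using 2
    · push_cast; field_simp
    · rw [cosThetaB]; push_cast; field_simp; ring_nf
  have key := cos_mul_eq_cosThetaB_mul_of_coprime hN htN hθ'
  have hangle : ((2 * q : ℕ) : ℝ) * (t * (2 * π / (2 * q * n : ℕ))) = t * (2 * π / n) := by
    push_cast; field_simp
  rw [hangle, cosThetaB_eq, cos_mul_two_pi_div_eq_of_modEq htr, ← cosThetaB_eq] at key
  linarith [neg_one_le_cos ((p * n : ℕ) * (t * (2 * π / (2 * q * n : ℕ)))),
    cosThetaB_lt_neg_one (cos_two_pi_mul_div_le hn h5r h2r)]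

theorem theta_B_irrational (k : ℤ) (hk : 3 ≤ k) (h4 : k ≠ 4) (h8 : k ≠ 8)
    (θ : ℝ) (h0 : 0 ≤ θ) (h1 : θ ≤ Real.pi)
    (hθ : Real.cos θ = -1 + Real.cos (6 * Real.pi / ((k : ℝ) + 2))
      - Real.cos (4 * Real.pi / ((k : ℝ) + 2))
      + 2 * Real.cos (2 * Real.pi / ((k : ℝ) + 2))) :
    Irrational (θ / Real.pi) :=
  theta_B_irrational_general k hk h4 h8 θ hθ
end

section
/- For every integer k ≥ 3, cos(6π/(k+2)) - 3cos(4π/(k+2)) + 3cos(2π/(k+2)) ≠ 1. -/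
theorem trace_W_ne_two (k : ℤ) (hk : 3 ≤ k) :
    Real.cos (6 * Real.pi / ((k : ℝ) + 2)) - 3 * Real.cos (4 * Real.pi / ((k : ℝ) + 2))
      + 3 * Real.cos (2 * Real.pi / ((k : ℝ) + 2)) ≠ 1 := by
  have hK : (5 : ℝ) ≤ (k : ℝ) + 2 := by
    have : (3 : ℝ) ≤ (k : ℝ) := by exact_mod_cast hk
    linarith
  have hKpos : (0 : ℝ) < (k : ℝ) + 2 := by linarith
  have hpi := Real.pi_pos
  set θ : ℝ := 2 * Real.pi / ((k : ℝ) + 2) with hθ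
  have hθpos : 0 < θ := by positivity
  have hθlt : θ < Real.pi / 2 := by
    rw [hθ, div_lt_iff₀ hKpos]
    nlinarith
  have h6 : 6 * Real.pi / ((k : ℝ) + 2) = 3 * θ := by
    rw [hθ]; ring
  have h4 : 4 * Real.pi / ((k : ℝ) + 2) = 2 * θ := by
    rw [hθ]; ring
  rw [h6, h4, Real.cos_three_mul, Real.cos_two_mul]
  set c : ℝ := Real.cos θ with hc
  have hcpos : 0 < c := Real.cos_pos_of_mem_Ioo ⟨by linarith, hθlt⟩
  have hclt : c < 1 := by
    have := Real.cos_lt_cos_of_nonneg_of_le_pi le_rfl (by linarith [Real.pi_pos] : θ ≤ Real.pi) hθpos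
    simpa [hc] using this
  intro h
  nlinarith [sq_nonneg (c - 1), mul_pos (mul_pos (sq_pos_iff.mpr (by intro h'; linarith [sub_eq_zero.mp h'] : c - 1 ≠ 0)) (by linarith : (0:ℝ) < 2 * c + 1)) (by norm_num : (0:ℝ) < 2)]
end

section
/- If θ ∈ [0, π] satisfies cos(θ) = (√5 - 2)/2, then θ/π is irrational. -/
noncomputable def dseq : ℕ → ℝ
  | 0 => 2
  | 1 => -(2 + Real.sqrt 5)
  | (n + 2) => -(2 + Real.sqrt 5) * dseq (n + 1) - dseq n

lemma sqrt5_ge_two : (2:ℝ) ≤ Real.sqrt 5 := by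
  rw [show (2:ℝ) = Real.sqrt 4 by rw [show (4:ℝ) = 2^2 by norm_num, Real.sqrt_sq]; norm_num]
  exact Real.sqrt_le_sqrt (by norm_num)

lemma sqrt5_sq : Real.sqrt 5 * Real.sqrt 5 = 5 :=
  Real.mul_self_sqrt (by norm_num)

lemma dseq_growth : ∀ n : ℕ,
    2 + Real.sqrt 5 ≤ |dseq (n + 1)| ∧ 3 * |dseq (n + 1)| ≤ |dseq (n + 2)| := by
  have hs := sqrt5_ge_two
  intro n
  induction n with
  | zero =>
    constructor
    · have : dseq 1 = -(2 + Real.sqrt 5) := rfl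
      rw [this, abs_neg, abs_of_nonneg (by linarith)]
    · have h1 : dseq 1 = -(2 + Real.sqrt 5) := rfl
      have h2 : dseq 2 = -(2 + Real.sqrt 5) * dseq 1 - dseq 0 := rfl
      have h0 : dseq 0 = 2 := rfl
      rw [h2, h1, h0, abs_neg, abs_of_nonneg (by linarith)]
      have : -(2 + Real.sqrt 5) * -(2 + Real.sqrt 5) - 2 = 7 + 4 * Real.sqrt 5 := by
        have := sqrt5_sq; ring_nf; nlinarith [sqrt5_sq]
      rw [this, abs_of_nonneg (by linarith)]
      linarith
  | succ n ih =>
    obtain ⟨ih1, ih2⟩ := ih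
    have hd2 : 2 + Real.sqrt 5 ≤ |dseq (n + 2)| := by linarith
    constructor
    · exact hd2
    · have hrec : dseq (n + 3) = -((2 + Real.sqrt 5) * dseq (n + 2) + dseq (n + 1)) := by
        show dseq (n + 1 + 2) = _
        rw [dseq]; ring
      rw [hrec, abs_neg]
      have h1 : |(2 + Real.sqrt 5) * dseq (n + 2)| - |dseq (n + 1)|
          ≤ |(2 + Real.sqrt 5) * dseq (n + 2) + dseq (n + 1)| := by
        have := abs_add_le ((2 + Real.sqrt 5) * dseq (n + 2) + dseq (n + 1)) (-(dseq (n + 1)))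
        simp at this
        calc |(2 + Real.sqrt 5) * dseq (n + 2)| - |dseq (n + 1)|
            = |(2 + Real.sqrt 5) * dseq (n + 2) + dseq (n + 1) + -(dseq (n+1))| - |dseq (n+1)| := by ring_nf
          _ ≤ |(2 + Real.sqrt 5) * dseq (n + 2) + dseq (n + 1)| := by
              have h := abs_add_le ((2 + Real.sqrt 5) * dseq (n + 2) + dseq (n + 1)) (-(dseq (n + 1)))
              rw [abs_neg] at h; linarith
      have h2 : |(2 + Real.sqrt 5) * dseq (n + 2)| = (2 + Real.sqrt 5) * |dseq (n + 2)| := by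
        rw [abs_mul, abs_of_nonneg (by linarith)]
      rw [h2] at h1
      have h3 : |dseq (n + 1)| ≤ |dseq (n + 2)| / 3 := by linarith
      nlinarith [abs_nonneg (dseq (n + 2))]

lemma key (θ : ℝ) (hθ : Real.cos θ = (Real.sqrt 5 - 2) / 2) :
    ∀ n : ℕ, ∃ a b : ℤ,
      2 * Real.cos (n * θ) = a + b * Real.sqrt 5 ∧ dseq n = a - b * Real.sqrt 5 := by
  have step : ∀ n : ℕ, Real.cos ((n + 2 : ℕ) * θ) + Real.cos (n * θ)
      = 2 * Real.cos ((n + 1 : ℕ) * θ) * Real.cos θ := by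
    intro n
    have h2 : ((n + 2 : ℕ) : ℝ) * θ = ((n + 1 : ℕ) : ℝ) * θ + θ := by push_cast; ring
    have h0 : ((n : ℕ) : ℝ) * θ = ((n + 1 : ℕ) : ℝ) * θ - θ := by push_cast; ring
    rw [h2, h0, Real.cos_add, Real.cos_sub]; ring
  intro n
  induction n using Nat.strong_induction_on with
  | _ n ih =>
    match n with
    | 0 =>
      refine ⟨2, 0, ?_, ?_⟩ <;> simp [dseq]
    | 1 =>
      refine ⟨-2, 1, ?_, ?_⟩
      · simp [hθ]; ring
      · simp [dseq]; ring
    | (m + 2) =>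
      obtain ⟨a1, b1, ha1, hd1⟩ := ih (m + 1) (by omega)
      obtain ⟨a0, b0, ha0, hd0⟩ := ih m (by omega)
      refine ⟨-2 * a1 + 5 * b1 - a0, a1 - 2 * b1 - b0, ?_, ?_⟩
      · have hs := step m
        have : 2 * Real.cos ((m + 2 : ℕ) * θ)
            = (Real.sqrt 5 - 2) * (2 * Real.cos ((m + 1 : ℕ) * θ)) - 2 * Real.cos (m * θ) := by
          rw [hθ] at hs; linarith
        rw [this, ha1, ha0]
        push_cast
        linear_combination (b1:ℝ) * sqrt5_sq
      · have : dseq (m + 2) = -(2 + Real.sqrt 5) * dseq (m + 1) - dseq m := rfl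
        rw [this, hd1, hd0]
        push_cast
        linear_combination (b1:ℝ) * sqrt5_sq

theorem theta_sqrt5_irrational (θ : ℝ) (h0 : 0 ≤ θ) (h1 : θ ≤ Real.pi)
    (hθ : Real.cos θ = (Real.sqrt 5 - 2) / 2) :
    Irrational (θ / Real.pi) := by
  by_contra hcon
  rw [Irrational] at hcon
  push_neg at hcon
  obtain ⟨r, hr⟩ := hcon
  have hpi : Real.pi ≠ 0 := Real.pi_ne_zero
  have hθr : θ = r * Real.pi := by
    rw [eq_div_iff hpi] at hr
    linarith
  set n : ℕ := 2 * r.den with hn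
  have hden : ((r.den : ℝ)) * r = r.num := by
    rw [Rat.cast_def]
    field_simp
  have hcosn : Real.cos (n * θ) = 1 := by
    have : (n : ℝ) * θ = (r.num : ℝ) * (2 * Real.pi) := by
      rw [hθr, hn]
      push_cast
      nlinarith [hden]
    rw [this]
    exact Real.cos_int_mul_two_pi r.num
  obtain ⟨a, b, hab, hd⟩ := key θ hθ n
  rw [hcosn] at hab
  have hsqrt5_irr : Irrational (Real.sqrt 5) := by
    have h5 : Nat.Prime 5 := by norm_num
    simpa using h5.irrational_sqrt
  have hb : b = 0 := by
    by_contra hb0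
    apply hsqrt5_irr
    refine ⟨(2 - a) / b, ?_⟩
    have hbR : (b : ℝ) ≠ 0 := Int.cast_ne_zero.mpr hb0
    push_cast
    field_simp
    linarith
  have ha : (a : ℝ) = 2 := by
    rw [hb] at hab; push_cast at hab; linarith
  have hd2 : dseq n = 2 := by
    rw [hd, ha, hb]; push_cast; ring
  have hpos : 1 ≤ r.den := r.pos
  have hn1 : ∃ m, n = m + 1 := ⟨n - 1, by omega⟩
  obtain ⟨m, hm⟩ := hn1
  have := (dseq_growth m).1
  rw [← hm, hd2] at this
  have hs := sqrt5_ge_two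
  rw [abs_of_nonneg (by norm_num : (0:ℝ) ≤ 2)] at this
  linarith
end

section
/- If θ ∈ [0, π] satisfies cos(θ) = (√2 - 2)/2, then θ/π is irrational. -/
/-!
If θ = (p/q)π, then for n = 2q the rescaled Chebyshev polynomial C_n (with C_n(2 cos φ) = 2 cos nφ)
sends 2 cos θ to 2. Replacing θ by π - θ, 2 cos θ becomes 2 - √2 ∈ ℤ[√2]; since C_n has integer
coefficients and √2 is irrational, the Galois conjugate 2 + √2 is also sent to 2. But
C_n(2 cosh t) = 2 cosh nt > 2 for t > 0, and 2 + √2 > 2.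
-/

open Polynomial Polynomial.Chebyshev Real

namespace Polynomial.Chebyshev

theorem map_eval_C {R S : Type*} [CommRing R] [CommRing S] (f : R →+* S) (n : ℤ) (x : R) :
    f ((C R n).eval x) = (C S n).eval (f x) := by
  rw [← map_C f, eval_map, eval₂_hom]

theorem two_lt_C_real_eval_of_two_lt {x : ℝ} (hx : 2 < x) {n : ℤ} (hn : n ≠ 0) :
    2 < (C ℝ n).eval x := by
  have ht : 0 < arcosh (x / 2) := arcosh_pos (by linarith)
  have hx_eq : 2 * cosh (arcosh (x / 2)) = x := by rw [cosh_arcosh (by linarith)]; ring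
  have hcosh : 1 < cosh (n * arcosh (x / 2)) :=
    one_lt_cosh.mpr (mul_ne_zero (Int.cast_ne_zero.mpr hn) ht.ne')
  rw [← hx_eq, C_two_mul_real_cosh]
  linarith

end Polynomial.Chebyshev

namespace Zsqrtd

theorem C_eval_toReal_star_of_eq_intCast {d : ℤ} (h0d : 0 ≤ d) (hd : ∀ m : ℤ, d ≠ m * m)
    {z : ℤ√d} {n k : ℤ} (h : (C ℝ n).eval (toReal h0d z) = k) :
    (C ℝ n).eval (toReal h0d (star z)) = k := by
  have hk : (C (ℤ√d) n).eval z = k :=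
    toReal_injective h0d hd (by rw [map_eval_C, h, map_intCast])
  rw [← starRingEnd_apply, ← map_eval_C, ← map_eval_C, hk, map_intCast, map_intCast]

end Zsqrtd

theorem exists_cos_int_mul_eq_one_of_not_irrational_div_pi {θ : ℝ} (h : ¬Irrational (θ / π)) :
    ∃ n : ℤ, n ≠ 0 ∧ cos (n * θ) = 1 := by
  obtain ⟨q, hq⟩ := not_not.mp h
  refine ⟨2 * q.den, by positivity, ?_⟩
  have hθ : θ = q * π := by rw [hq, div_mul_cancel₀ _ pi_ne_zero]
  have hden : (q.den : ℝ) * q = q.num := by exact_mod_cast Rat.den_mul_eq_num q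
  have hnθ : ((2 * q.den : ℤ) : ℝ) * θ = q.num * (2 * π) := by
    rw [hθ, ← hden]; push_cast; ring
  rw [hnθ, cos_int_mul_two_pi]

theorem irrational_div_pi_of_two_mul_cos_eq_toReal {d : ℤ} (h0d : 0 ≤ d)
    (hd : ∀ m : ℤ, d ≠ m * m) {θ : ℝ} {z : ℤ√d} (hθ : 2 * cos θ = Zsqrtd.toReal h0d z)
    (hz : 2 < Zsqrtd.toReal h0d (star z)) : Irrational (θ / π) := by
  by_contra h
  obtain ⟨n, hn, hcos⟩ := exists_cos_int_mul_eq_one_of_not_irrational_div_pi h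
  have hC : (C ℝ n).eval (Zsqrtd.toReal h0d z) = (2 : ℤ) := by
    rw [← hθ, C_two_mul_real_cos, hcos]; norm_num
  have hC_star := Zsqrtd.C_eval_toReal_star_of_eq_intCast h0d hd hC
  have hgt := two_lt_C_real_eval_of_two_lt hz hn
  rw [hC_star, Int.cast_ofNat] at hgt
  exact lt_irrefl _ hgt

theorem theta_sqrt2_irrational_general (θ : ℝ)
    (hθ : Real.cos θ = (Real.sqrt 2 - 2) / 2) :
    Irrational (θ / Real.pi) := by
  have hd : ∀ m : ℤ, (2 : ℤ) ≠ m * m := fun m hm =>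
    sq_ne_two_fin_zmod_four m (by exact_mod_cast congrArg (Int.cast : ℤ → ZMod 4) hm.symm)
  have hz : 2 * cos (π - θ) = Zsqrtd.toReal zero_le_two ⟨2, -1⟩ := by
    rw [cos_pi_sub, hθ]
    simp only [Zsqrtd.toReal_apply, Int.cast_ofNat, Int.cast_neg, Int.cast_one]
    ring
  have hz_star : 2 < Zsqrtd.toReal zero_le_two (star ⟨2, -1⟩ : ℤ√2) := by
    simp [Zsqrtd.toReal_apply]
  have hirr := irrational_div_pi_of_two_mul_cos_eq_toReal zero_le_two hd hz hz_star
  have hθπ : θ / π = 1 - (π - θ) / π := by field_simp; ring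
  rw [hθπ]
  simpa using hirr.natCast_sub 1

theorem theta_sqrt2_irrational (θ : ℝ) (h0 : 0 ≤ θ) (h1 : θ ≤ Real.pi)
    (hθ : Real.cos θ = (Real.sqrt 2 - 2) / 2) :
    Irrational (θ / Real.pi) :=
  theta_sqrt2_irrational_general θ hθ
end

section
/- If θ ∈ [0, π] satisfies cos(θ) = cos(3π/7) + cos(2π/7) - 1, then θ/π is irrational. -/
/-!
If `θ = rπ` with `r = p/n` rational, then `T_{2n}(cos θ) = cos (2pπ) = 1` for the Chebyshev
polynomial `T_{2n}`, so every real root `ρ` of the minimal polynomial of `cos θ` also satisfies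
`T_{2n}(ρ) = 1`, which forces `|ρ| ≤ 1`. Here `cos θ = cos (3π/7) + cos (2π/7) - 1` is, by the
relation `8y³ - 4y² - 4y + 1 = 0` for `y = cos (π/7)`, a root of the cubic
`x³ + 3x² + 5/4 x + 1/8`, which has no rational root and hence is its minimal polynomial; but this
cubic has a root in `[-3, -2]`.
-/

open Polynomial Real

lemma abs_le_one_of_aeval_minpoly_cos_rat_mul_pi (r : ℚ) {ρ : ℝ}
    (hρ : aeval ρ (minpoly ℚ (cos (r * π))) = 0) : |ρ| ≤ 1 := by
  set n : ℤ := 2 * r.den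
  have hn : n ≠ 0 := by positivity
  have hcos : aeval (cos (r * π)) (Chebyshev.T ℚ n - 1) = 0 := by
    rw [map_sub, Chebyshev.aeval_T, Chebyshev.T_real_cos, map_one, sub_eq_zero]
    have : (n : ℝ) * (r * π) = r.num * (2 * π) := by
      have : (r.den : ℝ) ≠ 0 := by positivity
      simp only [n, Rat.cast_def]; push_cast; field_simp
    rw [this, cos_int_mul_two_pi]
  have hρT : (Chebyshev.T ℝ n).eval ρ = 1 := by
    obtain ⟨g, hg⟩ := minpoly.dvd ℚ _ hcos
    have := congrArg (aeval ρ) hg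
    rwa [map_mul, hρ, zero_mul, map_sub, Chebyshev.aeval_T, map_one, sub_eq_zero] at this
  by_contra! h
  simpa [hρT] using Chebyshev.one_lt_abs_eval_T_real hn h

lemma rat_cubic_ne_zero (t : ℚ) : t ^ 3 + 6 * t ^ 2 + 5 * t + 1 ≠ 0 := by
  intro ht
  let p : ℤ[X] := X ^ 3 + C 6 * X ^ 2 + C 5 * X + 1
  have hp : p.Monic := by unfold p; monicity!
  obtain ⟨k, rfl, hk⟩ := exists_integer_of_is_root_of_monic hp (r := t) (by
    simp only [p, map_add, map_mul, map_pow, aeval_X, aeval_C, map_one]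
    simpa using ht)
  have hk : k = 1 ∨ k = -1 := Int.isUnit_iff.mp (isUnit_of_dvd_one (by simpa [p] using hk))
  rcases hk with rfl | rfl <;> norm_num at ht

lemma cos_pi_div_seven_cubic :
    8 * cos (π / 7) ^ 3 - 4 * cos (π / 7) ^ 2 - 4 * cos (π / 7) + 1 = 0 := by
  set y := cos (π / 7)
  -- `cos (4π/7) = -cos (3π/7)`, written as a polynomial identity in `y`
  have h : 2 * (2 * y ^ 2 - 1) ^ 2 - 1 = -(4 * y ^ 3 - 3 * y) := by
    rw [← cos_three_mul, ← cos_two_mul, ← cos_two_mul, ← cos_pi_sub]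
    ring_nf
  have hy : y + 1 ≠ 0 := by
    have : 0 < y := cos_pos_of_mem_Ioo ⟨by linarith [pi_pos], by linarith [pi_pos]⟩
    positivity
  exact (mul_eq_zero.mp (by linear_combination h : (y + 1) * _ = 0)).resolve_left hy

namespace ThetaSeven

noncomputable def cubic : ℚ[X] := X ^ 3 + C 3 * X ^ 2 + C (5 / 4) * X + C (1 / 8)

lemma aeval_cubic (x : ℝ) : aeval x cubic = x ^ 3 + 3 * x ^ 2 + 5 / 4 * x + 1 / 8 := by
  simp only [cubic, map_add, map_mul, map_pow, aeval_X, aeval_C]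
  norm_num

lemma cubic_monic : cubic.Monic := by unfold cubic; monicity!

lemma cubic_irreducible : Irreducible cubic := by
  have hdeg : cubic.natDegree = 3 := by unfold cubic; compute_degree!
  refine (irreducible_iff_roots_eq_zero_of_degree_le_three (by omega) (by omega)).mpr ?_
  refine Multiset.eq_zero_of_forall_notMem fun s hs => rat_cubic_ne_zero (2 * s) ?_
  have := (mem_roots cubic_monic.ne_zero).mp hs
  simp only [IsRoot, cubic, eval_add, eval_mul, eval_pow, eval_X, eval_C] at this
  linear_combination 8 * this

lemma aeval_cos_cubic :
    aeval (cos (3 * π / 7) + cos (2 * π / 7) - 1) cubic = 0 := by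
  have h2 : cos (2 * π / 7) = 2 * cos (π / 7) ^ 2 - 1 := by
    rw [← cos_two_mul]; ring_nf
  have h3 : cos (3 * π / 7) = 4 * cos (π / 7) ^ 3 - 3 * cos (π / 7) := by
    rw [← cos_three_mul]; ring_nf
  rw [aeval_cubic, h2, h3]
  linear_combination (8 * cos (π / 7) ^ 6 + 16 * cos (π / 7) ^ 5 - 16 * cos (π / 7) ^ 3
    - 7 * cos (π / 7) ^ 2 + 11 / 4 * cos (π / 7) + 13 / 8) * cos_pi_div_seven_cubic

lemma exists_aeval_cubic_eq_zero_le_neg_two : ∃ ρ : ℝ, ρ ≤ -2 ∧ aeval ρ cubic = 0 := by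
  have hcont : ContinuousOn (fun x : ℝ => aeval x cubic) (Set.Icc (-3) (-2)) := by
    simp only [aeval_cubic]; fun_prop
  obtain ⟨ρ, hρ, hρ0⟩ := intermediate_value_Icc (by norm_num) hcont
    (show (0 : ℝ) ∈ Set.Icc _ _ by simp only [aeval_cubic]; norm_num)
  exact ⟨ρ, hρ.2, hρ0⟩

end ThetaSeven

theorem theta_seven_irrational_general (θ : ℝ)
    (hθ : Real.cos θ = Real.cos (3 * Real.pi / 7) + Real.cos (2 * Real.pi / 7) - 1) :
    Irrational (θ / Real.pi) := by
  rintro ⟨r, hr⟩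
  have hθr : θ = r * π := by rw [hr, div_mul_cancel₀ _ pi_ne_zero]
  have hmin : minpoly ℚ (cos θ) = ThetaSeven.cubic :=
    (minpoly.eq_of_irreducible_of_monic ThetaSeven.cubic_irreducible
      (hθ ▸ ThetaSeven.aeval_cos_cubic) ThetaSeven.cubic_monic).symm
  obtain ⟨ρ, hρ, hρroot⟩ := ThetaSeven.exists_aeval_cubic_eq_zero_le_neg_two
  have hρ1 := abs_le_one_of_aeval_minpoly_cos_rat_mul_pi r (ρ := ρ) (by rwa [← hθr, hmin])
  linarith [neg_abs_le ρ]

theorem theta_seven_irrational (θ : ℝ) (h0 : 0 ≤ θ) (h1 : θ ≤ Real.pi)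
    (hθ : Real.cos θ = Real.cos (3 * Real.pi / 7) + Real.cos (2 * Real.pi / 7) - 1) :
    Irrational (θ / Real.pi) :=
  theta_seven_irrational_general θ hθ
end
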